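/- An R-module M is Gorenstein (L,A)-projective if and only if M is a direct summand of some strongly Gorenstein (L,A)-projective module. -/

import Mathlib

open CategoryTheory CategoryTheory.Limits DirectSum

namespace DualityPaper

variable {R : Type} [Ring R]

/-- The right `R`-module structure on the group of additive maps out of a left `R`-module,
given by `(f • r) m = f (r • m)`. -/
instance charModuleRight (M A : Type) [AddCommGroup M] [AddCommGroup A] [Module R M] :
    Module Rᵐᵒᵖ (M →+ A) where
  smul r f := f.comp (DistribMulAction.toAddMonoidHom M r.unop)
  one_smul f := AddMonoidHom.ext fun m => by
    show f ((1 : Rᵐᵒᵖ).unop • m) = f m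
    simp
  mul_smul r s f := AddMonoidHom.ext fun m => by
    show f ((r * s).unop • m) = f (s.unop • r.unop • m)
    rw [MulOpposite.unop_mul, mul_smul]
  smul_zero r := rfl
  smul_add r f g := rfl
  add_smul r s f := AddMonoidHom.ext fun m => by
    show f ((r + s).unop • m) = f (r.unop • m) + f (s.unop • m)
    rw [MulOpposite.unop_add, add_smul, map_add]
  zero_smul f := AddMonoidHom.ext fun m => by
    show f ((0 : Rᵐᵒᵖ).unop • m) = 0
    simp

/-- The left `R`-module structure on the group of additive maps out of a right `R`-module. -/
instance charModuleLeft (N A : Type) [AddCommGroup N] [AddCommGroup A] [Module Rᵐᵒᵖ N] :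
    Module R (N →+ A) where
  smul r f := f.comp (DistribMulAction.toAddMonoidHom N (MulOpposite.op r))
  one_smul f := AddMonoidHom.ext fun m => by
    show f ((MulOpposite.op (1 : R)) • m) = f m
    simp
  mul_smul r s f := AddMonoidHom.ext fun m => by
    show f (MulOpposite.op (r * s) • m) = f (MulOpposite.op s • MulOpposite.op r • m)
    rw [MulOpposite.op_mul, mul_smul]
  smul_zero r := rfl
  smul_add r f g := rfl
  add_smul r s f := AddMonoidHom.ext fun m => by
    show f (MulOpposite.op (r + s) • m) = f (MulOpposite.op r • m) + f (MulOpposite.op s • m)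
    rw [MulOpposite.op_add, add_smul, map_add]
  zero_smul f := AddMonoidHom.ext fun m => by
    show f (MulOpposite.op (0 : R) • m) = 0
    simp

/-- The character module `M⁺ = Hom_ℤ(M, ℚ/ℤ)` of a left module, as a right module. -/
def charL (M : ModuleCat.{0} R) : ModuleCat.{0} Rᵐᵒᵖ :=
  ModuleCat.of Rᵐᵒᵖ (M →+ AddCircle (1 : ℚ))

/-- The character module `N⁺ = Hom_ℤ(N, ℚ/ℤ)` of a right module, as a left module. -/
def charR (N : ModuleCat.{0} Rᵐᵒᵖ) : ModuleCat.{0} R :=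
  ModuleCat.of R (N →+ AddCircle (1 : ℚ))

/-- A left module over a (possibly noncommutative) ring is flat iff its character module is an
injective right module (Lambek); we take this as the definition of flatness. -/
def IsFlatMod (M : ModuleCat.{0} R) : Prop := CategoryTheory.Injective (charL M)

/-- `f`, `g` form a short exact sequence `0 → A → B → C → 0`. -/
def SES {A B C : ModuleCat.{0} R} (f : A ⟶ B) (g : B ⟶ C) : Prop :=
  ∃ w : f ≫ g = 0, (ShortComplex.mk f g w).ShortExact

/-- Vanishing of `Ext^n_R(M, N)`. -/
def ExtVanish (n : ℕ) (M N : ModuleCat.{0} R) : Prop :=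
  Subsingleton (((_root_.Ext ℤ (ModuleCat.{0} R) n).obj (Opposite.op M)).obj N)

/-- A complete duality pair `(𝓛, 𝓐)` over `R`. -/
structure CompleteDualityPair (𝓛 : Set (ModuleCat.{0} R)) (𝓐 : Set (ModuleCat.{0} Rᵐᵒᵖ)) :
    Prop where
  isoClosed_L : ∀ {M N : ModuleCat.{0} R}, (M ≅ N) → M ∈ 𝓛 → N ∈ 𝓛
  isoClosed_A : ∀ {M N : ModuleCat.{0} Rᵐᵒᵖ}, (M ≅ N) → M ∈ 𝓐 → N ∈ 𝓐
  char_mem_iff : ∀ M : ModuleCat.{0} R, M ∈ 𝓛 ↔ charL M ∈ 𝓐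
  char_mem_iff' : ∀ N : ModuleCat.{0} Rᵐᵒᵖ, N ∈ 𝓐 ↔ charR N ∈ 𝓛
  summands_A : ∀ A ∈ 𝓐, ∀ (B : ModuleCat.{0} Rᵐᵒᵖ) (i : B ⟶ A) (p : A ⟶ B),
    i ≫ p = 𝟙 B → B ∈ 𝓐
  sums_A : ∀ A B : ModuleCat.{0} Rᵐᵒᵖ, A ∈ 𝓐 → B ∈ 𝓐 → ModuleCat.of Rᵐᵒᵖ (A × B) ∈ 𝓐
  summands_L : ∀ L ∈ 𝓛, ∀ (K : ModuleCat.{0} R) (i : K ⟶ L) (p : L ⟶ K),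
    i ≫ p = 𝟙 K → K ∈ 𝓛
  sums_L : ∀ L K : ModuleCat.{0} R, L ∈ 𝓛 → K ∈ 𝓛 → ModuleCat.of R (L × K) ∈ 𝓛
  self_mem : ModuleCat.of R R ∈ 𝓛
  coprod_L : ∀ (ι : Type) (f : ι → ModuleCat.{0} R), (∀ i, f i ∈ 𝓛) →
    ModuleCat.of R (⨁ i, f i) ∈ 𝓛
  ext_L : ∀ {A B C : ModuleCat.{0} R} (f : A ⟶ B) (g : B ⟶ C),
    SES f g → A ∈ 𝓛 → C ∈ 𝓛 → B ∈ 𝓛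

/-- A doubly infinite exact sequence of projectives which stays exact after applying
`Hom_R(-, T)` for every `T` in the class `𝓣`. -/
structure IsTotallyAcyclicWrt (𝓣 : Set (ModuleCat.{0} R))
    (C : ChainComplex (ModuleCat.{0} R) ℤ) : Prop where
  projective : ∀ n, Projective (C.X n)
  exact : ∀ n, (C.sc n).Exact
  homExact : ∀ T ∈ 𝓣, ∀ (n : ℤ) (g : C.X n ⟶ T), C.d (n + 1) n ≫ g = 0 →
    ∃ h : C.X (n - 1) ⟶ T, C.d n (n - 1) ≫ h = g

/-- `M` is Gorenstein projective relative to the class `𝓣`:  it is a kernel in a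
`Hom_R(-, 𝓣)`-exact exact sequence of projective modules. -/
def IsGProj (𝓣 : Set (ModuleCat.{0} R)) (M : ModuleCat.{0} R) : Prop :=
  ∃ C : ChainComplex (ModuleCat.{0} R) ℤ, IsTotallyAcyclicWrt 𝓣 C ∧
    ∃ n : ℤ, Nonempty (M ≅ kernel (C.d n (n - 1)))

/-- `M` is strongly Gorenstein `(𝓛,𝓐)`-projective. -/
def IsSGProj (𝓣 : Set (ModuleCat.{0} R)) (M : ModuleCat.{0} R) : Prop :=
  ∃ (P : ModuleCat.{0} R) (f : P ⟶ P), Projective P ∧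
    (∃ w : f ≫ f = 0, (ShortComplex.mk f f w).Exact) ∧
    (∀ T ∈ 𝓣, ∀ g : P ⟶ T, f ≫ g = 0 → ∃ h : P ⟶ T, f ≫ h = g) ∧
    Nonempty (M ≅ kernel f)

/-- Resolution dimension of `M` with respect to a class `𝓒` is at most `n`. -/
def ResDimLE (𝓒 : Set (ModuleCat.{0} R)) : ℕ → ModuleCat.{0} R → Prop
  | 0, M => M ∈ 𝓒
  | n + 1, M => ∃ (K C : ModuleCat.{0} R) (f : K ⟶ C) (g : C ⟶ M),
      C ∈ 𝓒 ∧ SES f g ∧ ResDimLE 𝓒 n K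

/-- `K` is an `n`-th kernel of an exact sequence `0 → K → C_{n-1} → ⋯ → C₀ → M → 0`
with all `Cᵢ` in `𝓒`. -/
def IsNthSyzygy (𝓒 : Set (ModuleCat.{0} R)) : ℕ → ModuleCat.{0} R → ModuleCat.{0} R → Prop
  | 0, M, K => Nonempty (K ≅ M)
  | n + 1, M, K => ∃ (S C : ModuleCat.{0} R) (f : S ⟶ C) (g : C ⟶ M),
      C ∈ 𝓒 ∧ SES f g ∧ IsNthSyzygy 𝓒 n S K

/-- A left Frobenius pair `(𝓧, ω)`. -/
structure LeftFrobeniusPair (𝓧 ω : Set (ModuleCat.{0} R)) : Prop where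
  summands_X : ∀ X ∈ 𝓧, ∀ (Y : ModuleCat.{0} R) (i : Y ⟶ X) (p : X ⟶ Y),
    i ≫ p = 𝟙 Y → Y ∈ 𝓧
  extensions_X : ∀ {A B C : ModuleCat.{0} R} (f : A ⟶ B) (g : B ⟶ C),
    SES f g → A ∈ 𝓧 → C ∈ 𝓧 → B ∈ 𝓧
  kerEpi_X : ∀ {A B C : ModuleCat.{0} R} (f : A ⟶ B) (g : B ⟶ C),
    SES f g → B ∈ 𝓧 → C ∈ 𝓧 → A ∈ 𝓧
  subset : ω ⊆ 𝓧
  inj : ∀ X ∈ 𝓧, ∀ W ∈ ω, ∀ i : ℕ, 1 ≤ i → ExtVanish i X W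
  cogen : ∀ X ∈ 𝓧, ∃ (W X' : ModuleCat.{0} R) (f : X ⟶ W) (g : W ⟶ X'),
    W ∈ ω ∧ X' ∈ 𝓧 ∧ SES f g
  summands_ω : ∀ W ∈ ω, ∀ (V : ModuleCat.{0} R) (i : V ⟶ W) (p : W ⟶ V),
    i ≫ p = 𝟙 V → V ∈ ω

/-!
A totally acyclic complex `C` folds into the single `Hom(-, 𝓛)`-exact exact sequence
`⨁ Cₙ → ⨁ Cₙ → ⨁ Cₙ` with differential `⨁ dₙ`, and each `ker dₙ` is a summand of its kernel
`⨁ ker dₙ`.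

Conversely, let `M ⊕ N = W` with `0 → W → P → W → 0` exact and `Hom(-, 𝓛)`-exact. Summands of
such modules have syzygies and cosyzygies of the same kind: the kernel `π⁻¹N` of `P → W → M`
satisfies `π⁻¹N ⊕ π⁻¹M ≅ W ⊕ P` because `P` is projective, and the cokernel `P/M` of
`M → W → P` satisfies `P/M ⊕ P/N ≅ P ⊕ W` because `P ∈ 𝓛` and so `Ext¹(W, P) = 0`. Splicing
these sequences gives a complete resolution of `M`; it is `Hom(-, 𝓛)`-exact because
`Ext¹(-, 𝓛)` vanishes on `W` and hence on its summands.
-/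

lemma ses_iff {A B C : ModuleCat.{0} R} (f : A ⟶ B) (g : B ⟶ C) :
    SES f g ↔ Function.Injective f ∧ Function.Surjective g ∧
      LinearMap.range f.hom = LinearMap.ker g.hom := by
  constructor
  · rintro ⟨_, h⟩
    exact ⟨h.moduleCat_injective_f, h.moduleCat_surjective_g, h.exact.moduleCat_range_eq_ker⟩
  · rintro ⟨hf, hg, hfg⟩
    have w : f ≫ g = 0 := by
      ext x
      exact (hfg ▸ LinearMap.mem_range_self f.hom x : f x ∈ LinearMap.ker g.hom)
    have := (ModuleCat.mono_iff_injective f).mpr hf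
    have := (ModuleCat.epi_iff_surjective g).mpr hg
    exact ⟨w, ⟨(ShortComplex.moduleCat_exact_iff_range_eq_ker _).mpr hfg⟩⟩

namespace SES

variable {A B C : ModuleCat.{0} R} {f : A ⟶ B} {g : B ⟶ C}

lemma injective (h : SES f g) : Function.Injective f := ((ses_iff f g).mp h).1

lemma surjective (h : SES f g) : Function.Surjective g := ((ses_iff f g).mp h).2.1

lemma range_eq_ker (h : SES f g) : LinearMap.range f.hom = LinearMap.ker g.hom :=
  ((ses_iff f g).mp h).2.2

lemma apply_apply (h : SES f g) (x : A) : g (f x) = 0 :=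
  (h.range_eq_ker ▸ LinearMap.mem_range_self f.hom x : f x ∈ LinearMap.ker g.hom)

lemma exists_of_apply_eq_zero (h : SES f g) {y : B} (hy : g y = 0) : ∃ x, f x = y :=
  (h.range_eq_ker ▸ hy : y ∈ LinearMap.range f.hom)

lemma shortExact (h : SES f g) : (ShortComplex.mk f g h.1).ShortExact := h.2

end SES

lemma ses_prodMap {A B C A' B' C' : ModuleCat.{0} R} {f : A ⟶ B} {g : B ⟶ C}
    {f' : A' ⟶ B'} {g' : B' ⟶ C'} (h : SES f g) (h' : SES f' g') :
    SES (ModuleCat.ofHom (f.hom.prodMap f'.hom) :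
        ModuleCat.of R (A × A') ⟶ ModuleCat.of R (B × B'))
      (ModuleCat.ofHom (g.hom.prodMap g'.hom)) := by
  refine (ses_iff _ _).mpr ⟨h.injective.prodMap h'.injective,
    h.surjective.prodMap h'.surjective, ?_⟩
  simp only [ModuleCat.hom_ofHom, LinearMap.range_prodMap, LinearMap.ker_prodMap,
    h.range_eq_ker, h'.range_eq_ker]

lemma projective_prod {P Q : ModuleCat.{0} R} (hP : Projective P) (hQ : Projective Q) :
    Projective (ModuleCat.of R (P × Q)) := by
  rw [← IsProjective.iff_projective] at hP hQ ⊢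
  infer_instance

lemma exists_comp_eq_of_surjective {V B L : ModuleCat.{0} R} (π : V ⟶ B) (θ : V ⟶ L)
    (hπ : Function.Surjective π) (hker : ∀ v, π v = 0 → θ v = 0) :
    ∃ Φ : B ⟶ L, π ≫ Φ = θ := by
  refine ⟨ModuleCat.ofHom ((LinearMap.ker π.hom).liftQ θ.hom hker ∘ₗ
    (π.hom.quotKerEquivOfSurjective hπ).symm.toLinearMap), ?_⟩
  ext v
  have : (π.hom.quotKerEquivOfSurjective hπ).symm (π v) = Submodule.Quotient.mk v :=
    (LinearEquiv.symm_apply_eq _).mpr rfl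
  simp only [ModuleCat.hom_comp, ModuleCat.hom_ofHom, LinearMap.comp_apply, LinearEquiv.coe_coe,
    this]
  rfl

lemma projective_mem {𝓛 : Set (ModuleCat.{0} R)} {𝓐 : Set (ModuleCat.{0} Rᵐᵒᵖ)}
    (hdp : CompleteDualityPair 𝓛 𝓐) {Q : ModuleCat.{0} R} (hQ : Projective Q) :
    Q ∈ 𝓛 := by
  rw [← IsProjective.iff_projective] at hQ
  obtain ⟨s, hs⟩ := Module.projective_def'.mp hQ
  classical
  let e : (Q →₀ R) ≃ₗ[R] ⨁ _ : Q, ModuleCat.of R R := finsuppLequivDFinsupp R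
  refine hdp.summands_L _ (hdp.coprod_L Q _ fun _ => hdp.self_mem) Q
    (ModuleCat.ofHom (e.toLinearMap ∘ₗ s))
    (ModuleCat.ofHom (Finsupp.linearCombination R id ∘ₗ e.symm.toLinearMap)) ?_
  ext x
  simpa using DFunLike.congr_fun hs x

lemma _root_.CategoryTheory.Retract.r_i_apply {X W : ModuleCat.{0} R} (e : Retract X W) (x : X) :
    e.r (e.i x) = x := by
  rw [← ConcreteCategory.comp_apply, e.retract, ConcreteCategory.id_apply]

lemma _root_.CategoryTheory.Retract.isCompl_ker_range {X W : ModuleCat.{0} R} (e : Retract X W) :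
    IsCompl (LinearMap.ker e.r.hom) (LinearMap.range e.i.hom) := by
  refine ⟨Submodule.disjoint_def.mpr ?_, Submodule.codisjoint_iff_exists_add_eq.mpr fun w => ?_⟩
  · rintro _ hx ⟨x, rfl⟩
    have hx : e.r (e.i x) = 0 := hx
    rw [e.r_i_apply] at hx
    simp [hx]
  · exact ⟨w - e.i (e.r w), e.i (e.r w), by simp [e.r_i_apply], ⟨_, rfl⟩,
      sub_add_cancel _ _⟩

def retractProd (A B : Type) [AddCommGroup A] [Module R A] [AddCommGroup B] [Module R B] :
    Retract (ModuleCat.of R A) (ModuleCat.of R (A × B)) where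
  i := ModuleCat.ofHom (LinearMap.inl R A B)
  r := ModuleCat.ofHom (LinearMap.fst R A B)

section StronglyGorenstein

variable {𝓛 : Set (ModuleCat.{0} R)}

/-- `0 → W → P → W → 0` is exact with `P` projective and stays exact under `Hom_R(-, L)` for
`L ∈ 𝓛`; only the surjectivity of `Hom_R(P, L) → Hom_R(W, L)` needs stating. -/
def HasSGSequence (𝓛 : Set (ModuleCat.{0} R)) (W : ModuleCat.{0} R) : Prop :=
  ∃ (P : ModuleCat.{0} R) (ι : W ⟶ P) (π : P ⟶ W), Projective P ∧ SES ι π ∧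
    ∀ L ∈ 𝓛, ∀ ψ : W ⟶ L, ∃ h : P ⟶ L, ι ≫ h = ψ

lemma hasSGSequence_ker {P : ModuleCat.{0} R} (f : P ⟶ P) (hP : Projective P)
    (w : f ≫ f = 0) (hf : (ShortComplex.mk f f w).Exact)
    (hext : ∀ T ∈ 𝓛, ∀ g : P ⟶ T, f ≫ g = 0 → ∃ h : P ⟶ T, f ≫ h = g) :
    HasSGSequence 𝓛 (ModuleCat.of R (LinearMap.ker f.hom)) := by
  have hrange : LinearMap.range f.hom = LinearMap.ker f.hom :=
    (ShortComplex.moduleCat_exact_iff_range_eq_ker _).mp hf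
  have hff : ∀ x, f x ∈ LinearMap.ker f.hom := fun x => hrange ▸ LinearMap.mem_range_self _ x
  let π : P ⟶ ModuleCat.of R (LinearMap.ker f.hom) :=
    ModuleCat.ofHom (LinearMap.codRestrict _ f.hom hff)
  have hπ : Function.Surjective π := fun ⟨y, hy⟩ => by
    obtain ⟨x, rfl⟩ : y ∈ LinearMap.range f.hom := hrange ▸ hy
    exact ⟨x, rfl⟩
  refine ⟨P, ModuleCat.ofHom (LinearMap.ker f.hom).subtype, π, hP,
    (ses_iff _ _).mpr ⟨Subtype.val_injective, hπ, ?_⟩, fun L hL ψ => ?_⟩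
  · simp only [ModuleCat.hom_ofHom, Submodule.range_subtype, π, LinearMap.ker_codRestrict]
  · have hfπ : f ≫ π = 0 := by
      ext x
      simpa [π] using ConcreteCategory.congr_hom w x
    obtain ⟨h, hh⟩ := hext L hL (π ≫ ψ) (by rw [← Category.assoc, hfπ, zero_comp])
    refine ⟨h, ?_⟩
    ext z
    obtain ⟨x, rfl⟩ := hπ z
    exact ConcreteCategory.congr_hom hh x

lemma HasSGSequence.prod {A B : ModuleCat.{0} R} (hA : HasSGSequence 𝓛 A)
    (hB : HasSGSequence 𝓛 B) : HasSGSequence 𝓛 (ModuleCat.of R (A × B)) := by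
  obtain ⟨P, ι, π, hP, hs, hext⟩ := hA
  obtain ⟨P', ι', π', hP', hs', hext'⟩ := hB
  refine ⟨ModuleCat.of R (P × P'), ModuleCat.ofHom (ι.hom.prodMap ι'.hom),
    ModuleCat.ofHom (π.hom.prodMap π'.hom), projective_prod hP hP', ses_prodMap hs hs',
    fun L hL ψ => ?_⟩
  obtain ⟨h, hh⟩ := hext L hL (ModuleCat.ofHom (LinearMap.inl R A B) ≫ ψ)
  obtain ⟨h', hh'⟩ := hext' L hL (ModuleCat.ofHom (LinearMap.inr R A B) ≫ ψ)
  refine ⟨ModuleCat.ofHom (h.hom.coprod h'.hom), ?_⟩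
  refine ModuleCat.hom_ext (LinearMap.prod_ext ?_ ?_)
  · ext a
    simpa using ConcreteCategory.congr_hom hh a
  · ext b
    simpa using ConcreteCategory.congr_hom hh' b

lemma hasSGSequence_of_projective {Q : ModuleCat.{0} R} (hQ : Projective Q) :
    HasSGSequence 𝓛 Q := by
  refine ⟨ModuleCat.of R (Q × Q), ModuleCat.ofHom (LinearMap.inl R Q Q),
    ModuleCat.ofHom (LinearMap.snd R Q Q), projective_prod hQ hQ,
    (ses_iff _ _).mpr ⟨LinearMap.inl_injective, LinearMap.snd_surjective, ?_⟩,
    fun L _ ψ => ⟨ModuleCat.ofHom (LinearMap.fst R Q Q) ≫ ψ, rfl⟩⟩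
  exact LinearMap.range_inl R Q Q

/-- `Ext¹(X, L) = 0` for all `L ∈ 𝓛`, in elementary form: maps into `L` extend along every
monomorphism with cokernel `X`. -/
def ExtOneVanishes (𝓛 : Set (ModuleCat.{0} R)) (X : ModuleCat.{0} R) : Prop :=
  ∀ L ∈ 𝓛, ∀ {Y B : ModuleCat.{0} R} (a : Y ⟶ B) (b : B ⟶ X), SES a b →
    ∀ φ : Y ⟶ L, ∃ Φ : B ⟶ L, a ≫ Φ = φ

lemma ExtOneVanishes.of_retract {X W : ModuleCat.{0} R} (hW : ExtOneVanishes 𝓛 W)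
    (e : Retract X W) : ExtOneVanishes 𝓛 X := by
  intro L hL Y B a b hab φ
  let N := LinearMap.ker e.r.hom
  -- Since `W = i(X) ⊕ N`, the map `B × N → W` below is onto with kernel `a(Y) × 0`.
  let a' : Y ⟶ ModuleCat.of R (B × N) := ModuleCat.ofHom (LinearMap.inl R B N ∘ₗ a.hom)
  let b' : ModuleCat.of R (B × N) ⟶ W :=
    ModuleCat.ofHom ((e.i.hom ∘ₗ b.hom).coprod N.subtype)
  have hses : SES a' b' := by
    refine (ses_iff _ _).mpr ⟨LinearMap.inl_injective.comp hab.injective, fun w => ?_, ?_⟩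
    · obtain ⟨β, hβ⟩ := hab.surjective (e.r w)
      refine ⟨(β, ⟨w - e.i (e.r w), by simp [N, e.r_i_apply]⟩), ?_⟩
      simp [b', hβ]
    · apply le_antisymm
      · rintro _ ⟨y, rfl⟩
        simp [a', b', hab.apply_apply]
      · rintro ⟨β, n⟩ h
        have hβn : e.i (b β) + n = 0 := h
        have hb : b β = 0 := by simpa [e.r_i_apply, n.2] using congrArg e.r hβn
        rw [hb, map_zero, zero_add] at hβn
        obtain ⟨y, rfl⟩ := hab.exists_of_apply_eq_zero hb
        exact ⟨y, Prod.ext rfl (Subtype.ext hβn.symm)⟩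
  obtain ⟨Φ, hΦ⟩ := hW L hL a' b' hses φ
  exact ⟨ModuleCat.ofHom (LinearMap.inl R B N) ≫ Φ, hΦ⟩

lemma HasSGSequence.extOneVanishes {W : ModuleCat.{0} R} (hW : HasSGSequence 𝓛 W) :
    ExtOneVanishes 𝓛 W := by
  obtain ⟨P, ι, π, hP, hs, hext⟩ := hW
  intro L hL Y B a b hab φ
  have := hab.shortExact.epi_g
  have := hab.shortExact.mono_f
  let t : P ⟶ B := Projective.factorThru π b
  have htb : ∀ q, b (t q) = π q := ConcreteCategory.congr_hom (Projective.factorThru_comp π b)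
  let τ : W ⟶ Y := hab.shortExact.exact.lift (ι ≫ t) (by simp [t, hs.1])
  have hτ : ∀ w, a (τ w) = t (ι w) :=
    ConcreteCategory.congr_hom (hab.shortExact.exact.lift_f _ _)
  obtain ⟨h, hh⟩ := hext L hL (τ ≫ φ)
  have hh : ∀ w, h (ι w) = φ (τ w) := ConcreteCategory.congr_hom hh
  -- `Φ` is `h` on `t(P)` and `φ` on `a(Y)`; these span `B`, and `h ∘ ι = φ ∘ τ` makes `Φ`
  -- well defined.
  let s : ModuleCat.of R (P × Y) ⟶ B := ModuleCat.ofHom (t.hom.coprod a.hom)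
  have hs_surj : Function.Surjective s := by
    intro β
    obtain ⟨q, hq⟩ := hs.surjective (b β)
    obtain ⟨y, hy⟩ := hab.exists_of_apply_eq_zero (y := β - t q) (by simp [htb, hq])
    exact ⟨(q, y), by simp [s, hy]⟩
  have hs_ker : ∀ z, s z = 0 → (ModuleCat.ofHom (h.hom.coprod φ.hom) :
      ModuleCat.of R (P × Y) ⟶ L) z = 0 := by
    rintro ⟨q, y⟩ hqy
    have hqy : t q + a y = 0 := hqy
    obtain ⟨w, rfl⟩ := hs.exists_of_apply_eq_zero (y := q) (by
      simpa [htb, hab.apply_apply] using congrArg b hqy)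
    have hy : y = -τ w :=
      hab.injective (by rw [map_neg, hτ]; exact eq_neg_of_add_eq_zero_right hqy)
    simp [hh, hy]
  obtain ⟨Φ, hΦ⟩ := exists_comp_eq_of_surjective s _ hs_surj hs_ker
  exact ⟨Φ, by ext y; simpa [s] using ConcreteCategory.congr_hom hΦ (0, y)⟩

def IsSGSummand (𝓛 : Set (ModuleCat.{0} R)) (X : ModuleCat.{0} R) : Prop :=
  ∃ W : ModuleCat.{0} R, HasSGSequence 𝓛 W ∧ Nonempty (Retract X W)

lemma IsSGSummand.of_retract {X Y : ModuleCat.{0} R} (hY : IsSGSummand 𝓛 Y)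
    (e : Retract X Y) : IsSGSummand 𝓛 X :=
  let ⟨W, hW, ⟨e'⟩⟩ := hY
  ⟨W, hW, ⟨e.trans e'⟩⟩

lemma IsSGSummand.extOneVanishes {X : ModuleCat.{0} R} (hX : IsSGSummand 𝓛 X) :
    ExtOneVanishes 𝓛 X :=
  let ⟨_, hW, ⟨e⟩⟩ := hX
  hW.extOneVanishes.of_retract e

lemma IsSGProj.isSGSummand {G : ModuleCat.{0} R} (hG : IsSGProj 𝓛 G) : IsSGSummand 𝓛 G := by
  obtain ⟨P, f, hP, ⟨w, hf⟩, hext, ⟨e⟩⟩ := hG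
  exact ⟨_, hasSGSequence_ker f hP w hf hext,
    ⟨Retract.ofIso (e ≪≫ ModuleCat.kernelIsoKer f)⟩⟩

end StronglyGorenstein

section Syzygies

variable {𝓛 : Set (ModuleCat.{0} R)}

lemma nonempty_iso_comap_prod_comap {W' P W : ModuleCat.{0} R} {ι : W' ⟶ P} {π : P ⟶ W}
    (hs : SES ι π) (hP : Projective P) {A B : Submodule R W} (hAB : IsCompl A B) :
    Nonempty (ModuleCat.of R (A.comap π.hom × B.comap π.hom) ≅ ModuleCat.of R (W' × P)) := by
  have hιA : ∀ w, ι w ∈ A.comap π.hom := fun w => by simp [hs.apply_apply]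
  have hιB : ∀ w, ι w ∈ B.comap π.hom := fun w => by simp [hs.apply_apply]
  let α : W' ⟶ ModuleCat.of R (A.comap π.hom × B.comap π.hom) := ModuleCat.ofHom
    ((ι.hom.codRestrict _ hιA).prod (-ι.hom.codRestrict _ hιB))
  let σ : ModuleCat.of R (A.comap π.hom × B.comap π.hom) ⟶ P :=
    ModuleCat.ofHom ((A.comap π.hom).subtype.coprod (B.comap π.hom).subtype)
  have hses : SES α σ := by
    refine (ses_iff _ _).mpr ⟨fun w w' h => hs.injective (congrArg (·.1.1) h), fun c => ?_, ?_⟩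
    · obtain ⟨u, v, hu, hv, huv⟩ :=
        Submodule.codisjoint_iff_exists_add_eq.mp hAB.codisjoint (π c)
      obtain ⟨x, rfl⟩ := hs.surjective u
      have hv : c - x ∈ B.comap π.hom := by simpa [← huv] using hv
      exact ⟨(⟨x, hu⟩, ⟨c - x, hv⟩), by simp [σ]⟩
    · apply le_antisymm
      · rintro _ ⟨w, rfl⟩
        simp [α, σ]
      · rintro ⟨⟨x, hx⟩, ⟨y, hy⟩⟩ hxy
        have hxy : x + y = 0 := hxy
        obtain rfl : y = -x := eq_neg_of_add_eq_zero_right hxy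
        have hπx : π x = 0 := Submodule.disjoint_def.mp hAB.disjoint _ hx (by simpa using hy)
        obtain ⟨w, rfl⟩ := hs.exists_of_apply_eq_zero hπx
        exact ⟨w, rfl⟩
  have := hses.shortExact.epi_g
  have : Projective (ShortComplex.mk α σ hses.1).X₃ := hP
  exact ⟨hses.shortExact.splittingOfProjective.isoBinaryBiproduct ≪≫
    ModuleCat.biprodIsoProd _ _⟩

lemma nonempty_iso_quotient_prod_quotient {W' P W : ModuleCat.{0} R} {ι : W' ⟶ P}
    {π : P ⟶ W} (hs : SES ι π) (hW : ExtOneVanishes 𝓛 W) (hP : P ∈ 𝓛)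
    {A B : Submodule R W'} (hAB : IsCompl A B) :
    Nonempty (ModuleCat.of R ((P ⧸ A.map ι.hom) × (P ⧸ B.map ι.hom)) ≅
      ModuleCat.of R (P × W)) := by
  have hle : ∀ C : Submodule R W', C.map ι.hom ≤ LinearMap.ker π.hom := fun C =>
    hs.range_eq_ker ▸ LinearMap.map_le_range
  let Δ : P ⟶ ModuleCat.of R ((P ⧸ A.map ι.hom) × (P ⧸ B.map ι.hom)) :=
    ModuleCat.ofHom ((A.map ι.hom).mkQ.prod (B.map ι.hom).mkQ)
  let ρ : ModuleCat.of R ((P ⧸ A.map ι.hom) × (P ⧸ B.map ι.hom)) ⟶ W := ModuleCat.ofHom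
    (((A.map ι.hom).liftQ π.hom (hle A)).coprod (-(B.map ι.hom).liftQ π.hom (hle B)))
  have hses : SES Δ ρ := by
    refine (ses_iff _ _).mpr ⟨?_, fun w => ?_, ?_⟩
    · refine (injective_iff_map_eq_zero _).mpr fun x hx => ?_
      obtain ⟨hxA, hxB⟩ := Prod.ext_iff.mp hx
      obtain ⟨a, ha, rfl⟩ := (Submodule.Quotient.mk_eq_zero _).mp hxA
      obtain ⟨b, hb, hba⟩ := (Submodule.Quotient.mk_eq_zero _).mp hxB
      obtain rfl := hs.injective hba
      simp [Submodule.disjoint_def.mp hAB.disjoint _ ha hb]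
    · obtain ⟨x, rfl⟩ := hs.surjective w
      exact ⟨(Submodule.Quotient.mk x, 0), by simp [ρ]⟩
    · apply le_antisymm
      · rintro _ ⟨x, rfl⟩
        simp [Δ, ρ]
      · rintro ⟨c₁, c₂⟩ hc
        obtain ⟨x, rfl⟩ := Submodule.mkQ_surjective _ c₁
        obtain ⟨y, rfl⟩ := Submodule.mkQ_surjective _ c₂
        have hxy : π (x - y) = 0 := by simpa [ρ, sub_eq_add_neg] using hc
        obtain ⟨w, hw⟩ := hs.exists_of_apply_eq_zero hxy
        obtain ⟨a, b, ha, hb, rfl⟩ := Submodule.codisjoint_iff_exists_add_eq.mp hAB.codisjoint w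
        refine ⟨x - ι a, Prod.ext ((Submodule.Quotient.eq _).mpr ?_)
          ((Submodule.Quotient.eq _).mpr ?_)⟩
        · exact ⟨-a, neg_mem ha, by simp⟩
        · exact ⟨b, hb, by rw [map_add] at hw; rw [sub_right_comm, ← hw]; abel⟩
  obtain ⟨r, hr⟩ := hW P hP Δ ρ hses (𝟙 P)
  exact ⟨(ShortComplex.Splitting.ofExactOfRetraction _ hses.shortExact.exact r hr
    hses.shortExact.epi_g).isoBinaryBiproduct ≪≫ ModuleCat.biprodIsoProd _ _⟩

def IsProjSyzygy (Y X : ModuleCat.{0} R) : Prop :=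
  ∃ (E : ModuleCat.{0} R) (a : Y ⟶ E) (b : E ⟶ X), Projective E ∧ SES a b

lemma IsSGSummand.exists_syzygy {X : ModuleCat.{0} R} (hX : IsSGSummand 𝓛 X) :
    ∃ Y, IsSGSummand 𝓛 Y ∧ IsProjSyzygy Y X := by
  obtain ⟨W, hW, ⟨e⟩⟩ := hX
  obtain ⟨P, ι, π, hP, hs, -⟩ := id hW
  let K := (LinearMap.ker e.r.hom).comap π.hom
  obtain ⟨iso⟩ := nonempty_iso_comap_prod_comap hs hP e.isCompl_ker_range
  refine ⟨ModuleCat.of R K, ⟨_, hW.prod (hasSGSequence_of_projective hP),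
    ⟨(retractProd _ _).trans (Retract.ofIso iso)⟩⟩, P, ModuleCat.ofHom K.subtype, π ≫ e.r,
    hP, (ses_iff _ _).mpr ⟨Subtype.val_injective, fun x => ?_, K.range_subtype⟩⟩
  obtain ⟨w, hw⟩ := hs.surjective (e.i x)
  exact ⟨w, by simp [hw, e.r_i_apply]⟩

lemma IsSGSummand.exists_cosyzygy {𝓐 : Set (ModuleCat.{0} Rᵐᵒᵖ)}
    (hdp : CompleteDualityPair 𝓛 𝓐) {X : ModuleCat.{0} R} (hX : IsSGSummand 𝓛 X) :
    ∃ Y, IsSGSummand 𝓛 Y ∧ IsProjSyzygy X Y := by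
  obtain ⟨W, hW, ⟨e⟩⟩ := hX
  obtain ⟨P, ι, π, hP, hs, -⟩ := id hW
  let C := (LinearMap.range e.i.hom).map ι.hom
  obtain ⟨iso⟩ := nonempty_iso_quotient_prod_quotient hs hW.extOneVanishes
    (projective_mem hdp hP) e.isCompl_ker_range.symm
  refine ⟨ModuleCat.of R (P ⧸ C), ⟨_, (hasSGSequence_of_projective hP).prod hW,
    ⟨(retractProd _ _).trans (Retract.ofIso iso)⟩⟩, P, e.i ≫ ι, ModuleCat.ofHom C.mkQ, hP,
    (ses_iff _ _).mpr ⟨?_, C.mkQ_surjective, ?_⟩⟩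
  · exact hs.injective.comp ((ModuleCat.mono_iff_injective e.i).mp inferInstance)
  · simp [C, LinearMap.range_comp]

end Syzygies

section Splicing

variable {𝓛 : Set (ModuleCat.{0} R)}

lemma exists_isProjSyzygy_chain (S : ModuleCat.{0} R → Prop)
    (hcover : ∀ X, S X → ∃ Y, S Y ∧ IsProjSyzygy Y X)
    (hcocover : ∀ X, S X → ∃ Y, S Y ∧ IsProjSyzygy X Y) {M : ModuleCat.{0} R} (hM : S M) :
    ∃ Z : ℤ → ModuleCat.{0} R, Z 0 = M ∧ (∀ n, S (Z n)) ∧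
      ∀ n, IsProjSyzygy (Z (n + 1)) (Z n) := by
  choose cover hcoverS hcover using hcover
  choose cocover hcocoverS hcocover using hcocover
  let left : ℕ → {X // S X} := fun k =>
    Nat.rec ⟨M, hM⟩ (fun _ X => ⟨cover X.1 X.2, hcoverS _ _⟩) k
  let right : ℕ → {X // S X} := fun k =>
    Nat.rec ⟨M, hM⟩ (fun _ X => ⟨cocover X.1 X.2, hcocoverS _ _⟩) k
  let Z : ℤ → {X // S X}
    | .ofNat k => left k
    | .negSucc k => right (k + 1)
  refine ⟨fun n => (Z n).1, rfl, fun n => (Z n).2, ?_⟩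
  rintro (k | _ | k)
  · exact hcover _ _
  · exact hcocover _ _
  · exact hcocover _ _

lemma isGProj_of_isProjSyzygy_chain {Z : ℤ → ModuleCat.{0} R}
    (hZ : ∀ n, ExtOneVanishes 𝓛 (Z n)) (hchain : ∀ n, IsProjSyzygy (Z (n + 1)) (Z n)) :
    IsGProj 𝓛 (Z 0) := by
  choose E ι π hE hs using hchain
  let C : ChainComplex (ModuleCat.{0} R) ℤ := ChainComplex.of E (fun n => π (n + 1) ≫ ι n)
    (fun n => by simp [reassoc_of% (hs (n + 1)).1])
  have hd : ∀ m, C.d (m + 1) m = π (m + 1) ≫ ι m := fun m => by simp [C]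
  have hexact : ∀ n, (C.sc n).Exact := by
    intro n
    obtain ⟨m, rfl⟩ : ∃ m, n = m + 1 := ⟨n - 1, by omega⟩
    refine (C.exactAt_iff' (m + 1 + 1) (m + 1) m (by simp) (by simp)).mpr ?_
    rw [ShortComplex.moduleCat_exact_iff]
    intro (x : E (m + 1)) hx
    have hx : ι m (π (m + 1) x) = 0 := by rw [← ConcreteCategory.comp_apply, ← hd]; exact hx
    obtain ⟨z, rfl⟩ := (hs (m + 1)).exists_of_apply_eq_zero (y := x)
      ((hs m).injective (by rw [hx, map_zero]))
    obtain ⟨y, rfl⟩ := (hs (m + 1 + 1)).surjective z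
    exact ⟨y, by rw [← ConcreteCategory.comp_apply, ← hd]; rfl⟩
  have hhom : ∀ T ∈ 𝓛, ∀ (n : ℤ) (g : C.X n ⟶ T), C.d (n + 1) n ≫ g = 0 →
      ∃ h : C.X (n - 1) ⟶ T, C.d n (n - 1) ≫ h = g := by
    intro T hT n g hg
    obtain ⟨m, rfl⟩ : ∃ m, n = m + 1 := ⟨n - 1, by omega⟩
    rw [add_sub_cancel_right, hd]
    have := (hs (m + 1)).shortExact.epi_g
    have := (hs (m + 1 + 1)).shortExact.epi_g
    have hιg : ι (m + 1) ≫ g = 0 := by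
      rw [← cancel_epi (π (m + 1 + 1)), comp_zero, ← Category.assoc, ← hd, hg]
    obtain ⟨h, hh⟩ := hZ m T hT (ι m) (π m) (hs m)
      ((hs (m + 1)).shortExact.exact.desc g hιg)
    exact ⟨h, by rw [Category.assoc, hh]; exact (hs (m + 1)).shortExact.exact.g_desc g hιg⟩
  -- `ker (π (m + 1) ≫ ι m) ≅ Z (m + 2)`, so `m = -2` recovers `Z 0`.
  have := (hs (-2 + 1)).shortExact.mono_f
  have := (hs (-2)).shortExact.mono_f
  have hker : Nonempty (Z 0 ≅ kernel (C.d (-2 + 1) (-2))) := by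
    rw [hd]
    exact ⟨eqToIso (congrArg Z (by norm_num)) ≪≫
      IsLimit.conePointUniqueUpToIso (hs (-2 + 1)).shortExact.exact.fIsKernel
        (kernelIsKernel _) ≪≫ (kernelCompMono _ _).symm⟩
  exact ⟨C, ⟨hE, hexact, hhom⟩, -2 + 1, hker⟩

lemma isGProj_of_retract_isSGProj {𝓐 : Set (ModuleCat.{0} Rᵐᵒᵖ)}
    (hdp : CompleteDualityPair 𝓛 𝓐) {M G : ModuleCat.{0} R} (hG : IsSGProj 𝓛 G)
    (e : Retract M G) : IsGProj 𝓛 M := by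
  obtain ⟨Z, rfl, hZ, hchain⟩ := exists_isProjSyzygy_chain (IsSGSummand 𝓛)
    (fun _ h => h.exists_syzygy) (fun _ h => h.exists_cosyzygy hdp) (hG.isSGSummand.of_retract e)
  exact isGProj_of_isProjSyzygy_chain (fun n => (hZ n).extOneVanishes) hchain

end Splicing

section DirectSum

variable (C : ChainComplex (ModuleCat.{0} R) ℤ)

noncomputable def sumDifferential :
    ModuleCat.of R (⨁ n, C.X n) ⟶ ModuleCat.of R (⨁ n, C.X n) :=
  ModuleCat.ofHom (DirectSum.toModule R ℤ _ fun n =>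
    DirectSum.lof R ℤ (fun k => C.X k) (n - 1) ∘ₗ (C.d n (n - 1)).hom)

variable {C}

lemma sumDifferential_lof {i j : ℤ} (h : j + 1 = i) (x : C.X i) :
    sumDifferential C (DirectSum.lof R ℤ (fun k => C.X k) i x) =
      DirectSum.lof R ℤ (fun k => C.X k) j (C.d i j x) := by
  obtain rfl : j = i - 1 := by omega
  exact DirectSum.toModule_lof (M := fun k => C.X k) R i x

lemma component_sumDifferential {i j : ℤ} (h : j + 1 = i) (x : ⨁ n, C.X n) :
    DirectSum.component R ℤ (fun k => C.X k) j (sumDifferential C x) =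
      C.d i j (DirectSum.component R ℤ (fun k => C.X k) i x) := by
  classical
  induction x using DirectSum.induction_on with
  | zero => simp
  | of k a =>
    rw [← DirectSum.lof_eq_of R, sumDifferential_lof (show k - 1 + 1 = k by omega)]
    by_cases hk : k = i
    · subst hk
      obtain rfl : j = k - 1 := by omega
      simp only [DirectSum.component.lof_self]
    · rw [DirectSum.component.of, DirectSum.component.of, dif_neg (by omega), dif_neg hk,
        map_zero]
  | add x y hx hy => simp only [map_add, hx, hy]

lemma sumDifferential_comp_self : sumDifferential C ≫ sumDifferential C = 0 := by
  refine ModuleCat.hom_ext (DirectSum.linearMap_ext R fun k => LinearMap.ext fun a => ?_)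
  change sumDifferential C (sumDifferential C (DirectSum.lof R ℤ (fun k => C.X k) k a)) = 0
  rw [sumDifferential_lof (show k - 1 + 1 = k by omega),
    sumDifferential_lof (show k - 1 - 1 + 1 = k - 1 by omega), ← ConcreteCategory.comp_apply,
    C.d_comp_d]
  simp

lemma exact_sumDifferential (hC : ∀ n, (C.sc n).Exact) :
    (ShortComplex.mk _ _ (sumDifferential_comp_self (C := C))).Exact := by
  classical
  have hcycle : ∀ i (x : C.X i), C.d i (i - 1) x = 0 → ∃ u, C.d (i + 1) i u = x := by
    intro i
    have := (C.exactAt_iff' (i + 1) i (i - 1) (by simp) (by simp)).mp (hC i)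
    exact (ShortComplex.moduleCat_exact_iff _).mp this
  rw [ShortComplex.moduleCat_exact_iff]
  intro (x : ⨁ n, C.X n) hx
  choose u hu using fun i => hcycle i _ <| by
    rw [← component_sumDifferential (sub_add_cancel i 1), show sumDifferential C x = 0 from hx,
      map_zero]
  refine ⟨∑ i ∈ DFinsupp.support x, DirectSum.lof R ℤ (fun k => C.X k) (i + 1) (u i), ?_⟩
  change sumDifferential C _ = x
  simp only [map_sum, sumDifferential_lof rfl, hu]
  exact DirectSum.sum_support_of x

lemma sumDifferential_homExact {𝓣 : Set (ModuleCat.{0} R)} (hC : IsTotallyAcyclicWrt 𝓣 C) :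
    ∀ T ∈ 𝓣, ∀ g : ModuleCat.of R (⨁ n, C.X n) ⟶ T, sumDifferential C ≫ g = 0 →
      ∃ h, sumDifferential C ≫ h = g := by
  intro T hT g hg
  have hlift : ∀ m, ∃ h : C.X m ⟶ T, C.d (m + 1) m ≫ h =
      ModuleCat.ofHom (g.hom ∘ₗ DirectSum.lof R ℤ (fun k => C.X k) (m + 1)) := by
    intro m
    have := hC.homExact T hT (m + 1)
      (ModuleCat.ofHom (g.hom ∘ₗ DirectSum.lof R ℤ (fun k => C.X k) (m + 1))) <| by
      ext x
      change g (DirectSum.lof R ℤ (fun k => C.X k) (m + 1) (C.d (m + 1 + 1) (m + 1) x)) = 0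
      rw [← sumDifferential_lof rfl, ← ConcreteCategory.comp_apply, hg]
      rfl
    rwa [add_sub_cancel_right] at this
  choose h hh using hlift
  refine ⟨ModuleCat.ofHom (DirectSum.toModule R ℤ T fun m => (h m).hom),
    ModuleCat.hom_ext (DirectSum.linearMap_ext R fun k => LinearMap.ext fun a => ?_)⟩
  obtain ⟨m, rfl⟩ : ∃ m, k = m + 1 := ⟨k - 1, by omega⟩
  change DirectSum.toModule R ℤ T (fun m => (h m).hom)
    (sumDifferential C (DirectSum.lof R ℤ (fun k => C.X k) (m + 1) a)) = _
  rw [sumDifferential_lof rfl, DirectSum.toModule_lof]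
  exact ConcreteCategory.congr_hom (hh m) a

lemma projective_directSum (hC : ∀ n, Projective (C.X n)) :
    Projective (ModuleCat.of R (⨁ n, C.X n)) := by
  have (n : ℤ) : Module.Projective R (C.X n) := (IsProjective.iff_projective _).mpr (hC n)
  exact (IsProjective.iff_projective _).mp inferInstance

noncomputable def retractKerSumDifferential (n : ℤ) :
    Retract (kernel (C.d n (n - 1))) (kernel (sumDifferential C)) := by
  refine (Retract.ofIso (ModuleCat.kernelIsoKer _)).trans
    (Retract.trans ?_ (Retract.ofIso (ModuleCat.kernelIsoKer _).symm))
  exact {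
    i := ModuleCat.ofHom (LinearMap.codRestrict _
      (DirectSum.lof R ℤ (fun k => C.X k) n ∘ₗ (LinearMap.ker (C.d n (n - 1)).hom).subtype)
      fun z => by simp [sumDifferential_lof (sub_add_cancel n 1)])
    r := ModuleCat.ofHom (LinearMap.codRestrict _
      (DirectSum.component R ℤ (fun k => C.X k) n ∘ₗ
        (LinearMap.ker (sumDifferential C).hom).subtype)
      fun z => by simp [← component_sumDifferential (sub_add_cancel n 1)])
    retract := by
      ext z
      exact DirectSum.component.lof_self (M := fun k => C.X k) R n z.1 }

lemma IsGProj.exists_retract_isSGProj {𝓛 : Set (ModuleCat.{0} R)} {M : ModuleCat.{0} R}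
    (hM : IsGProj 𝓛 M) : ∃ (G : ModuleCat.{0} R) (i : M ⟶ G) (p : G ⟶ M),
      IsSGProj 𝓛 G ∧ i ≫ p = 𝟙 M := by
  obtain ⟨C, hC, n, ⟨e⟩⟩ := hM
  let r := (Retract.ofIso e).trans (retractKerSumDifferential n)
  exact ⟨kernel (sumDifferential C), r.i, r.r,
    ⟨_, sumDifferential C, projective_directSum hC.projective,
      ⟨_, exact_sumDifferential hC.exact⟩, sumDifferential_homExact hC, ⟨Iso.refl _⟩⟩,
    r.retract⟩

end DirectSum

theorem stmt17
    (R : Type) [Ring R] (𝓛 : Set (ModuleCat.{0} R)) (𝓐 : Set (ModuleCat.{0} Rᵐᵒᵖ))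
    (hdp : CompleteDualityPair 𝓛 𝓐) (M : ModuleCat.{0} R) :
    IsGProj 𝓛 M ↔
      ∃ (G : ModuleCat.{0} R) (i : M ⟶ G) (p : G ⟶ M),
        IsSGProj 𝓛 G ∧ i ≫ p = 𝟙 M := by
  refine ⟨IsGProj.exists_retract_isSGProj, ?_⟩
  rintro ⟨G, i, p, hG, hip⟩
  exact isGProj_of_retract_isSGProj hdp hG ⟨i, p, hip⟩

end DualityPaper
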